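/- Assume k₁ ≤ ⋯ ≤ k_d and k ≥ 2, and let Λ_{j,l} be the number of 𝐚 ∈ ℕ^j with 𝐚 ≼ (k₁,…,k_j) and |𝐚| = l. Then for 1 ≤ l ≤ k−1 and 1 ≤ j < d, Λ_{j+1,k}·Λ_{j,l} − Λ_{j,k}·Λ_{j+1,l} ≥ 0. -/

import Mathlib

open Finset

/-- The level-set count in `j` dimensions:
`Λ_{j,l} = #{𝐚 ∈ ℕ^j : 𝐚 ≼ (k₁,…,k_j), |𝐚| = l}`. -/
def levelCount (d : ℕ) (k : Fin d → ℕ) (j : ℕ) (hj : j ≤ d) (l : ℕ) : ℕ :=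
  ((Finset.Iic (fun i : Fin j => k (Fin.castLE hj i))).filter
    (fun a : Fin j → ℕ => (∑ i, a i) = l)).card

/-!
Extend `l ↦ Λ_{j,l}` by zero to `ℤ`. Splitting off the last coordinate shows that `Λ_{j+1}` is
the window sum `m ↦ ∑_{i=0}^{k_{j+1}} Λ_{j,m-i}` of `Λ_j`, and `Λ_0` is the indicator of `0`.
Sequences with `f x * f y ≤ f u * f v` whenever `x ≤ u ≤ v ≤ y` and `u + v = x + y` are closed
under window sums, so every `Λ_j` has this property, and the claim follows termwise from
`Λ_{j+1,K} Λ_{j,l} - Λ_{j,K} Λ_{j+1,l} = ∑_i (Λ_{j,K-i} Λ_{j,l} - Λ_{j,K} Λ_{j,l-i})`.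
-/

section LogConcave

variable {R : Type*} [CommSemiring R] [PartialOrder R]

/-- Log-concavity together with the absence of internal zeros. -/
def LogConcave (f : ℤ → R) : Prop :=
  ∀ ⦃x u v y : ℤ⦄, x ≤ u → u ≤ v → v ≤ y → u + v = x + y → f x * f y ≤ f u * f v

lemma LogConcave.mul_le_mul_of_between {f : ℤ → R} (hf : LogConcave f) {x y u v : ℤ}
    (hxu : x ≤ u) (hxv : x ≤ v) (huy : u ≤ y) (hvy : v ≤ y) (hsum : u + v = x + y) :
    f x * f y ≤ f u * f v := by
  rcases le_total u v with huv | hvu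
  · exact hf hxu huv hvy hsum
  · rw [mul_comm (f u)]
    exact hf hxv hvu huy (by omega)

lemma logConcave_of_step {f : ℤ → R}
    (hstep : ∀ m n : ℤ, m ≤ n → f (m - 1) * f (n + 1) ≤ f m * f n) : LogConcave f := by
  suffices ∀ t : ℕ, ∀ x u v y : ℤ, x ≤ u → u ≤ v → v ≤ y → u + v = x + y → u - x = t →
      f x * f y ≤ f u * f v from
    fun x u v y hxu huv hvy hsum =>
      this _ x u v y hxu huv hvy hsum (Int.toNat_of_nonneg (by omega)).symm
  intro t
  induction t with
  | zero =>
    intro x u v y _ _ _ hsum ht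
    obtain ⟨rfl, rfl⟩ : x = u ∧ y = v := by omega
    exact le_rfl
  | succ t ih =>
    intro x u v y hxu huv hvy hsum ht
    calc f x * f y ≤ f (u - 1) * f (v + 1) :=
          ih x (u - 1) (v + 1) y (by omega) (by omega) (by omega) (by omega) (by omega)
      _ ≤ f u * f v := hstep u v huv

def windowSum (K : ℕ) (f : ℤ → R) (m : ℤ) : R :=
  ∑ i ∈ range (K + 1), f (m - i)

variable [IsOrderedAddMonoid R]

/-- The permutation `σ` of the index box `[0, K]²` matches the interior terms of the two sides
exactly; the boundary terms are compared by log-concavity of `f`. -/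
lemma LogConcave.windowSum_step {f : ℤ → R} (hf : LogConcave f) (K : ℕ) {m n : ℤ}
    (hmn : m ≤ n) :
    windowSum K f (m - 1) * windowSum K f (n + 1) ≤ windowSum K f m * windowSum K f n := by
  let σ : ℕ × ℕ → ℕ × ℕ := fun p =>
    if p.2 = 0 then (0, p.1) else if p.1 = K then (p.2, K) else (p.1 + 1, p.2 - 1)
  let τ : ℕ × ℕ → ℕ × ℕ := fun q =>
    if q.1 = 0 then (q.2, 0) else if q.2 = K then (K, q.1) else (q.1 - 1, q.2 + 1)
  simp only [windowSum, sum_mul_sum, ← sum_product']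
  calc ∑ p ∈ range (K + 1) ×ˢ range (K + 1), f (m - 1 - p.1) * f (n + 1 - p.2)
      ≤ ∑ p ∈ range (K + 1) ×ˢ range (K + 1), f (m - (σ p).1) * f (n - (σ p).2) := by
        refine sum_le_sum fun p hp => ?_
        simp only [mem_product, mem_range] at hp
        simp only [σ]
        split_ifs
        · exact hf.mul_le_mul_of_between (by omega) (by omega) (by omega) (by omega) (by omega)
        · exact hf.mul_le_mul_of_between (by omega) (by omega) (by omega) (by omega) (by omega)
        · apply le_of_eq; congr 2 <;> omega
    _ = ∑ p ∈ range (K + 1) ×ˢ range (K + 1), f (m - p.1) * f (n - p.2) := by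
        refine sum_nbij' σ τ ?_ ?_ ?_ ?_ fun _ _ => rfl <;> rintro ⟨a, b⟩ hab <;>
          simp only [mem_product, mem_range] at hab ⊢ <;> grind

lemma LogConcave.mul_windowSum_le {f : ℤ → R} (hf : LogConcave f) (K : ℕ) {l n : ℤ}
    (hln : l ≤ n) : f n * windowSum K f l ≤ windowSum K f n * f l := by
  simp only [windowSum, mul_sum, sum_mul]
  refine sum_le_sum fun i hi => ?_
  rw [mul_comm (f n)]
  exact hf.mul_le_mul_of_between (by omega) (by omega) (by omega) (by omega) (by omega)

lemma LogConcave.windowSum {f : ℤ → R} (hf : LogConcave f) (K : ℕ) :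
    LogConcave (windowSum K f) :=
  logConcave_of_step fun _ _ hmn => hf.windowSum_step K hmn

end LogConcave

lemma logConcave_ite_eq_zero : LogConcave (fun m : ℤ => if m = 0 then 1 else 0 : ℤ → ℕ) := by
  intro x u v y hxu huv hvy hsum
  by_cases hxy : x = 0 ∧ y = 0
  · obtain ⟨rfl, rfl⟩ : u = 0 ∧ v = 0 := by omega
    simp [hxy]
  · dsimp only
    split_ifs <;> omega

section levelCountInt

variable (d : ℕ) (k : Fin d → ℕ)

/-- `levelCount` with the level in `ℤ`, so that it vanishes at negative levels. -/
def levelCountInt (j : ℕ) (hj : j ≤ d) (m : ℤ) : ℕ :=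
  #{a ∈ Iic (fun i : Fin j => k (Fin.castLE hj i)) | ((∑ i, a i : ℕ) : ℤ) = m}

lemma levelCountInt_natCast (j : ℕ) (hj : j ≤ d) (l : ℕ) :
    levelCountInt d k j hj l = levelCount d k j hj l := by
  simp only [levelCountInt, levelCount, Nat.cast_inj]

lemma levelCountInt_zero (hj : 0 ≤ d) (m : ℤ) :
    levelCountInt d k 0 hj m = if m = 0 then 1 else 0 := by
  simp only [levelCountInt, univ_eq_empty, sum_empty, Nat.cast_zero]
  split_ifs with hm
  · rw [hm, filter_true_of_mem fun _ _ => rfl, card_eq_one]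
    exact ⟨fun i => k (Fin.castLE hj i), eq_singleton_iff_unique_mem.2
      ⟨mem_Iic.2 le_rfl, fun _ _ => Subsingleton.elim _ _⟩⟩
  · rw [filter_false_of_mem fun _ _ h => hm h.symm, card_empty]

lemma levelCountInt_succ (j : ℕ) (hj : j + 1 ≤ d) :
    levelCountInt d k (j + 1) hj =
      windowSum (k (Fin.castLE hj (Fin.last j))) (levelCountInt d k j (by omega)) := by
  classical
  ext m
  rw [windowSum, levelCountInt, card_eq_sum_card_fiberwise (f := fun a => a (Fin.last j))
    (t := range (k (Fin.castLE hj (Fin.last j)) + 1))]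
  · refine sum_congr rfl fun i hi => ?_
    rw [filter_filter]
    refine card_nbij' Fin.init (fun b => Fin.snoc b i) ?_ ?_ ?_ ?_
    · intro a ha
      simp only [coe_filter, Set.mem_ofPred_eq, mem_Iic] at ha ⊢
      obtain ⟨hle, hsum, rfl⟩ := ha
      refine ⟨fun t => hle t.castSucc, ?_⟩
      rw [Fin.sum_univ_castSucc, Nat.cast_add] at hsum
      simp only [Fin.init]
      omega
    · intro b hb
      simp only [coe_filter, Set.mem_ofPred_eq, mem_Iic] at hb ⊢
      obtain ⟨hle, hsum⟩ := hb
      refine ⟨fun t => ?_, ?_, Fin.snoc_last _ _⟩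
      · induction t using Fin.lastCases with
        | last => simpa [Nat.lt_succ_iff] using hi
        | cast t => simpa using hle t
      · rw [Fin.sum_univ_castSucc]
        simp only [Fin.snoc_castSucc, Fin.snoc_last, Nat.cast_add]
        omega
    · intro a ha
      simp only [coe_filter, Set.mem_ofPred_eq] at ha
      rw [← ha.2.2]
      exact Fin.snoc_init_self a
    · intro b _
      exact Fin.init_snoc _ _
  · intro a ha
    simp only [coe_filter, mem_Iic, Set.mem_ofPred_eq] at ha
    simpa [Nat.lt_succ_iff] using ha.1 (Fin.last j)

lemma logConcave_levelCountInt : ∀ (j : ℕ) (hj : j ≤ d), LogConcave (levelCountInt d k j hj)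
  | 0, hj => by
    rw [funext (levelCountInt_zero d k hj)]
    exact logConcave_ite_eq_zero
  | j + 1, hj => by
    rw [levelCountInt_succ]
    exact (logConcave_levelCountInt j _).windowSum _

end levelCountInt

theorem stmt17_general (d : ℕ) (k : Fin d → ℕ)
    (K : ℕ) (l : ℕ) (hlK : l ≤ K - 1)
    (j : ℕ) (hjd : j < d) :
    (0 : ℤ) ≤ (levelCount d k (j + 1) hjd K : ℤ) * (levelCount d k j hjd.le l : ℤ)
      - (levelCount d k j hjd.le K : ℤ) * (levelCount d k (j + 1) hjd l : ℤ) := by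
  have h := (logConcave_levelCountInt d k j hjd.le).mul_windowSum_le
    (k (Fin.castLE hjd (Fin.last j))) (show (l : ℤ) ≤ K by omega)
  simp only [← levelCountInt_succ, levelCountInt_natCast] at h
  rw [sub_nonneg]
  exact_mod_cast h

/-- For `k₁ ≤ ⋯ ≤ k_d`, `k ≥ 2`, `1 ≤ l ≤ k−1` and `1 ≤ j < d`:
`Λ_{j+1,k}·Λ_{j,l} − Λ_{j,k}·Λ_{j+1,l} ≥ 0`. -/
theorem stmt17 (d : ℕ) (k : Fin d → ℕ) (hmono : Monotone k)
    (K : ℕ) (hK : 2 ≤ K) (l : ℕ) (hl : 1 ≤ l) (hlK : l ≤ K - 1)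
    (j : ℕ) (hj1 : 1 ≤ j) (hjd : j < d) :
    (0 : ℤ) ≤ (levelCount d k (j + 1) hjd K : ℤ) * (levelCount d k j hjd.le l : ℤ)
      - (levelCount d k j hjd.le K : ℤ) * (levelCount d k (j + 1) hjd l : ℤ) :=
  stmt17_general d k K l hlK j hjd
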